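/- Let Δ ≠ 0, let ℓ and m be positive integers with ℓ ≤ m, and let S ⊆ ℤ satisfy [−ℓ, ℓ] ⊆ [−m, m] ⊆ S. Then | P[ |argmin_{t∈[−m,m]} X_Δ(t)| ≤ ℓ ] − P[ |argmin_{t∈S} X_Δ(t)| ≤ ℓ ] | ≤ (2·e^{−Δ²/8}/(1 − e^{−Δ²/8}))·e^{−m·Δ²/8}, where the argmins denote the respective a.s. unique minimizers. -/

import Mathlib

/-! If the minimizer `LS` over `S` lies in `[-m, m]`, it is also the minimizer over `[-m, m]`,
so the events `|argmin| ≤ ℓ` can only differ when `|LS| > m`. Then `X_Δ(LS) < X_Δ(0) = 0`, so the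
walk is nonpositive at some `|t| > m`. Each `X_Δ(t)` is a signed sum of `|t|` standard Gaussians
plus the drift `|t| |Δ| / 2`, so Hoeffding's inequality gives `P[X_Δ(t) ≤ 0] ≤ e^{-|t| Δ² / 8}`,
and a union bound over `t = ±(m + 1 + k)` sums to the geometric tail of the claim. -/

open MeasureTheory ProbabilityTheory Filter

/-- Two-sided Gaussian random walk with drift `|Δ|/2`. -/
noncomputable def walkX {Ω : Type*} (ε : ℤ → Ω → ℝ) (Δ : ℝ) (i : ℤ) (ω : Ω) : ℝ :=
  if 0 < i then Real.sign Δ * (∑ j ∈ Finset.Icc (1 : ℤ) i, ε j ω) + (i : ℝ) * |Δ| / 2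
  else if i < 0 then
    -(Real.sign Δ * (∑ j ∈ Finset.Icc (i + 1) (0 : ℤ), ε j ω)) + ((|i| : ℤ) : ℝ) * |Δ| / 2
  else 0

/-- `L` is almost surely the unique minimizer of the process `f` over the set `S ⊆ ℤ`. -/
def IsASUniqueArgminOn {Ω : Type*} [MeasurableSpace Ω] (μ : Measure Ω)
    (f : ℤ → Ω → ℝ) (S : Set ℤ) (L : Ω → ℤ) : Prop :=
  ∀ᵐ ω ∂μ, L ω ∈ S ∧ ∀ t ∈ S, t ≠ L ω → f (L ω) ω < f t ω

open scoped NNReal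

section

variable {Ω : Type*} {mΩ : MeasurableSpace Ω} {μ : Measure Ω}

namespace MeasureTheory

lemma measureReal_iUnion_le_tsum [IsFiniteMeasure μ] {s : ℕ → Set Ω} {b : ℕ → ℝ}
    (hb : Summable b) (h : ∀ n, μ.real (s n) ≤ b n) : μ.real (⋃ n, s n) ≤ ∑' n, b n := by
  have hb0 : ∀ n, 0 ≤ b n := fun n ↦ measureReal_nonneg.trans (h n)
  rw [← ENNReal.toReal_ofReal (tsum_nonneg hb0)]
  refine ENNReal.toReal_mono ENNReal.ofReal_ne_top ?_
  calc μ (⋃ n, s n) ≤ ∑' n, μ (s n) := measure_iUnion_le s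
    _ ≤ ∑' n, ENNReal.ofReal (b n) := ENNReal.tsum_le_tsum fun n ↦ by
        rw [← ofReal_measureReal]; exact ENNReal.ofReal_le_ofReal (h n)
    _ = ENNReal.ofReal (∑' n, b n) := (ENNReal.ofReal_tsum_of_nonneg hb0 hb).symm

lemma abs_measureReal_sub_le_of_ae_iff [IsFiniteMeasure μ] {A B E : Set Ω}
    (h : ∀ᵐ ω ∂μ, ω ∉ E → (ω ∈ A ↔ ω ∈ B)) : |μ.real A - μ.real B| ≤ μ.real E := by
  have bound : ∀ {A B : Set Ω}, (∀ᵐ ω ∂μ, ω ∉ E → ω ∈ A → ω ∈ B) →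
      μ.real A ≤ μ.real B + μ.real E := by
    intro A B hAB
    calc μ.real A ≤ μ.real (B ∪ E) := by
          refine ENNReal.toReal_mono (measure_ne_top μ _) (measure_mono_ae ?_)
          filter_upwards [hAB] with ω hω hA
          by_cases hE : ω ∈ E
          · exact Or.inr hE
          · exact Or.inl (hω hE hA)
      _ ≤ μ.real B + μ.real E := measureReal_union_le B E
  rw [abs_sub_le_iff]
  constructor
  · linarith [bound (h.mono fun ω hω hE ↦ (hω hE).1)]
  · linarith [bound (h.mono fun ω hω hE ↦ (hω hE).2)]

end MeasureTheory

namespace ProbabilityTheory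

lemma hasSubgaussianMGF_of_map_eq_gaussianReal {X : Ω → ℝ} {v : ℝ≥0}
    (h : μ.map X = gaussianReal 0 v) : HasSubgaussianMGF X v μ := by
  have hX : AEMeasurable X μ := aemeasurable_of_map_neZero (by rw [h]; infer_instance)
  rw [← HasSubgaussianMGF.id_map_iff hX, h]
  refine ⟨fun t ↦ integrable_exp_mul_gaussianReal t, fun t ↦ ?_⟩
  simp [mgf_id_gaussianReal]

lemma measureReal_mul_sum_add_nonpos_le {ι : Type*} {ε : ι → Ω → ℝ} (hindep : iIndepFun ε μ)
    (hsub : ∀ i, HasSubgaussianMGF (ε i) 1 μ) {a : ℝ} (ha : |a| = 1) (F : Finset ι) {δ : ℝ}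
    (hδ : 0 ≤ δ) :
    μ.real {ω | a * ∑ j ∈ F, ε j ω + F.card * δ ≤ 0} ≤ Real.exp (-F.card * δ ^ 2 / 2) := by
  have hsum : HasSubgaussianMGF (fun ω ↦ -a * ∑ j ∈ F, ε j ω) F.card μ := by
    convert (HasSubgaussianMGF.sum_of_iIndepFun hindep (s := F) fun i _ ↦ hsub i).const_mul (-a)
      using 1
    ext
    -- the variance factor of `const_mul` is a bare subtype `⟨r ^ 2, _⟩` that `simp` cannot coerce
    change _ = (-a) ^ 2 * ((∑ i ∈ F, (1 : ℝ≥0) : ℝ≥0) : ℝ)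
    rw [neg_sq, ← sq_abs, ha]
    simp
  calc μ.real {ω | a * ∑ j ∈ F, ε j ω + F.card * δ ≤ 0}
      = μ.real {ω | F.card * δ ≤ -a * ∑ j ∈ F, ε j ω} := by
        congr 1
        ext ω
        simp only [Set.mem_ofPred_eq, neg_mul]
        constructor <;> intro h <;> linarith
    _ ≤ Real.exp (-(F.card * δ) ^ 2 / (2 * F.card)) := hsum.measure_ge_le (by positivity)
    _ = Real.exp (-F.card * δ ^ 2 / 2) := by
        rcases (Nat.cast_nonneg (α := ℝ) F.card).eq_or_lt with h | h
        · simp [← h]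
        · congr 1; field_simp

end ProbabilityTheory

section walk

variable {ε : ℤ → Ω → ℝ} {Δ : ℝ}

lemma walkX_zero (ε : ℤ → Ω → ℝ) (Δ : ℝ) (ω : Ω) : walkX ε Δ 0 ω = 0 := by
  simp [walkX]

lemma exists_walkX_eq_mul_sum_add (hΔ : Δ ≠ 0) {t : ℤ} (ht : t ≠ 0) :
    ∃ (a : ℝ) (F : Finset ℤ), |a| = 1 ∧ F.card = t.natAbs ∧
      ∀ ω, walkX ε Δ t ω = a * ∑ j ∈ F, ε j ω + F.card * (|Δ| / 2) := by
  have hsign : |Real.sign Δ| = 1 := by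
    rcases hΔ.lt_or_gt with h | h <;> simp [Real.sign_of_neg, Real.sign_of_pos, h]
  rcases ht.lt_or_gt with hneg | hpos
  · refine ⟨-Real.sign Δ, Finset.Icc (t + 1) 0, by rwa [abs_neg], by simp; omega, fun ω ↦ ?_⟩
    have hcard : ((-t).toNat : ℝ) = |(t : ℝ)| := by
      rw [abs_of_neg (by exact_mod_cast hneg)]
      exact_mod_cast Int.toNat_of_nonneg (by omega)
    simp [walkX, hneg, hneg.not_gt, hcard]
    ring
  · refine ⟨Real.sign Δ, Finset.Icc 1 t, hsign, by simp; omega, fun ω ↦ ?_⟩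
    have hcard : (t.toNat : ℝ) = t := by exact_mod_cast Int.toNat_of_nonneg hpos.le
    simp [walkX, hpos, hcard]
    ring

lemma measureReal_walkX_nonpos_le (hindep : iIndepFun ε μ)
    (hgauss : ∀ i, μ.map (ε i) = gaussianReal 0 1) (hΔ : Δ ≠ 0) {t : ℤ} (ht : t ≠ 0) :
    μ.real {ω | walkX ε Δ t ω ≤ 0} ≤ Real.exp (-t.natAbs * Δ ^ 2 / 8) := by
  obtain ⟨a, F, ha, hF, hX⟩ := exists_walkX_eq_mul_sum_add (ε := ε) hΔ ht
  have h := measureReal_mul_sum_add_nonpos_le hindep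
    (fun i ↦ hasSubgaussianMGF_of_map_eq_gaussianReal (hgauss i)) ha F
    (by positivity : 0 ≤ |Δ| / 2)
  simp_rw [hX]
  convert h using 2
  rw [hF, div_pow, sq_abs]
  ring

lemma measureReal_exists_abs_gt_walkX_nonpos_le [IsFiniteMeasure μ] (hindep : iIndepFun ε μ)
    (hgauss : ∀ i, μ.map (ε i) = gaussianReal 0 1) (hΔ : Δ ≠ 0) (m : ℕ) :
    μ.real {ω | ∃ t : ℤ, (m : ℤ) < |t| ∧ walkX ε Δ t ω ≤ 0}
      ≤ 2 * Real.exp (-(Δ ^ 2) / 8) / (1 - Real.exp (-(Δ ^ 2) / 8)) *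
          Real.exp (-(m : ℝ) * Δ ^ 2 / 8) := by
  set r := Real.exp (-(Δ ^ 2) / 8)
  have hr1 : r < 1 := Real.exp_lt_one_iff.2 (by nlinarith [sq_pos_of_ne_zero hΔ])
  have hexp : ∀ n : ℕ, Real.exp (-n * Δ ^ 2 / 8) = r ^ n := fun n ↦ by
    rw [← Real.exp_nat_mul]; ring_nf
  let E : ℕ → Set Ω := fun k ↦
    {ω | walkX ε Δ (m + 1 + k : ℕ) ω ≤ 0} ∪ {ω | walkX ε Δ (-(m + 1 + k : ℕ)) ω ≤ 0}
  have hsub : {ω | ∃ t : ℤ, (m : ℤ) < |t| ∧ walkX ε Δ t ω ≤ 0} ⊆ ⋃ k, E k := by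
    rintro ω ⟨t, hmt, hXt⟩
    refine Set.mem_iUnion.2 ⟨t.natAbs - (m + 1), ?_⟩
    rw [Int.abs_eq_natAbs] at hmt
    have hn : m + 1 + (t.natAbs - (m + 1)) = t.natAbs := by omega
    rcases Int.natAbs_eq t with h | h <;> rw [h] at hXt
    · exact Or.inl (by simpa [E, hn] using hXt)
    · exact Or.inr (by simpa [E, hn] using hXt)
  have hE : ∀ k, μ.real (E k) ≤ 2 * r ^ (m + 1) * r ^ k := fun k ↦ by
    calc μ.real (E k) ≤ r ^ (m + 1 + k) + r ^ (m + 1 + k) := by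
          refine (measureReal_union_le _ _).trans (add_le_add ?_ ?_) <;>
          · refine (measureReal_walkX_nonpos_le hindep hgauss hΔ (by omega)).trans_eq ?_
            rw [← hexp]
            simp only [Int.natAbs_neg, Int.natAbs_natCast]
      _ = 2 * r ^ (m + 1) * r ^ k := by ring
  have hgeom := summable_geometric_of_lt_one (Real.exp_pos _).le hr1
  calc _ ≤ μ.real (⋃ k, E k) := measureReal_mono hsub
    _ ≤ ∑' k, 2 * r ^ (m + 1) * r ^ k := measureReal_iUnion_le_tsum (hgeom.mul_left _) hE
    _ = 2 * r / (1 - r) * Real.exp (-(m : ℝ) * Δ ^ 2 / 8) := by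
        rw [tsum_mul_left, tsum_geometric_of_lt_one (Real.exp_pos _).le hr1, hexp]
        ring

end walk

namespace IsASUniqueArgminOn

lemma ae_eq_of_mem {f : ℤ → Ω → ℝ} {T S : Set ℤ} {L₁ L₂ : Ω → ℤ}
    (h₁ : IsASUniqueArgminOn μ f T L₁) (h₂ : IsASUniqueArgminOn μ f S L₂) (hTS : T ⊆ S) :
    ∀ᵐ ω ∂μ, L₂ ω ∈ T → L₁ ω = L₂ ω := by
  filter_upwards [h₁, h₂] with ω ⟨hmem₁, hmin₁⟩ ⟨_, hmin₂⟩ hmem₂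
  by_contra hne
  exact (hmin₁ _ hmem₂ (Ne.symm hne)).asymm (hmin₂ _ (hTS hmem₁) hne)

lemma ae_mem_Icc_or_exists_walkX_nonpos {ε : ℤ → Ω → ℝ} {Δ : ℝ} {S : Set ℤ} {L : Ω → ℤ}
    {m : ℕ} (h : IsASUniqueArgminOn μ (walkX ε Δ) S L) (hS : Set.Icc (-(m : ℤ)) m ⊆ S) :
    ∀ᵐ ω ∂μ, L ω ∈ Set.Icc (-(m : ℤ)) m ∨ ∃ t : ℤ, (m : ℤ) < |t| ∧ walkX ε Δ t ω ≤ 0 := by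
  filter_upwards [h] with ω ⟨_, hmin⟩
  by_cases hL : L ω ∈ Set.Icc (-(m : ℤ)) m
  · exact Or.inl hL
  have hne : L ω ≠ 0 := by rintro h; exact hL (h ▸ ⟨by omega, by omega⟩)
  have hneg : walkX ε Δ (L ω) ω ≤ 0 :=
    (hmin 0 (hS ⟨by omega, by omega⟩) hne.symm).le.trans_eq (walkX_zero ε Δ ω)
  refine Or.inr ⟨L ω, ?_, hneg⟩
  rw [Set.mem_Icc, not_and_or, not_le, not_le] at hL
  rw [lt_abs]
  omega

end IsASUniqueArgminOn

end

theorem argmin_prob_comparison_general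
    {Ω : Type*} [MeasurableSpace Ω] (μ : Measure Ω) [IsProbabilityMeasure μ]
    (ε : ℤ → Ω → ℝ)
    (hindep : iIndepFun ε μ)
    (hgauss : ∀ i, Measure.map (ε i) μ = gaussianReal 0 1)
    (Δ : ℝ) (hΔ : Δ ≠ 0) (ℓ m : ℕ)
    (S : Set ℤ) (hS : Set.Icc (-(m : ℤ)) (m : ℤ) ⊆ S)
    (Lm LS : Ω → ℤ)
    (hLm : IsASUniqueArgminOn μ (walkX ε Δ) (Set.Icc (-(m : ℤ)) (m : ℤ)) Lm)
    (hLS : IsASUniqueArgminOn μ (walkX ε Δ) S LS) :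
    |(μ {ω | |Lm ω| ≤ (ℓ : ℤ)}).toReal - (μ {ω | |LS ω| ≤ (ℓ : ℤ)}).toReal|
      ≤ 2 * Real.exp (-(Δ ^ 2) / 8) / (1 - Real.exp (-(Δ ^ 2) / 8)) *
          Real.exp (-(m : ℝ) * Δ ^ 2 / 8) := by
  have hagree : ∀ᵐ ω ∂μ, ω ∉ {ω | ∃ t : ℤ, (m : ℤ) < |t| ∧ walkX ε Δ t ω ≤ 0} →
      (ω ∈ {ω | |Lm ω| ≤ (ℓ : ℤ)} ↔ ω ∈ {ω | |LS ω| ≤ (ℓ : ℤ)}) := by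
    filter_upwards [hLm.ae_eq_of_mem hLS hS, hLS.ae_mem_Icc_or_exists_walkX_nonpos hS]
      with ω heq hdich hesc
    rw [heq (hdich.resolve_right hesc)]
  exact (abs_measureReal_sub_le_of_ae_iff hagree).trans
    (measureReal_exists_abs_gt_walkX_nonpos_le hindep hgauss hΔ m)

/-- For `[−ℓ,ℓ] ⊆ [−m,m] ⊆ S`,
`|P[|argmin_{[−m,m]} X_Δ| ≤ ℓ] − P[|argmin_S X_Δ| ≤ ℓ]|
  ≤ (2 e^{−Δ²/8}/(1 − e^{−Δ²/8})) e^{−mΔ²/8}`. -/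
theorem argmin_prob_comparison
    {Ω : Type*} [MeasurableSpace Ω] (μ : Measure Ω) [IsProbabilityMeasure μ]
    (ε : ℤ → Ω → ℝ)
    (hmeas : ∀ i, Measurable (ε i))
    (hindep : iIndepFun ε μ)
    (hgauss : ∀ i, Measure.map (ε i) μ = gaussianReal 0 1)
    (Δ : ℝ) (hΔ : Δ ≠ 0) (ℓ m : ℕ) (hℓ : 0 < ℓ) (hℓm : ℓ ≤ m)
    (S : Set ℤ) (hS : Set.Icc (-(m : ℤ)) (m : ℤ) ⊆ S)
    (Lm LS : Ω → ℤ)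
    (hLm : IsASUniqueArgminOn μ (walkX ε Δ) (Set.Icc (-(m : ℤ)) (m : ℤ)) Lm)
    (hLS : IsASUniqueArgminOn μ (walkX ε Δ) S LS) :
    |(μ {ω | |Lm ω| ≤ (ℓ : ℤ)}).toReal - (μ {ω | |LS ω| ≤ (ℓ : ℤ)}).toReal|
      ≤ 2 * Real.exp (-(Δ ^ 2) / 8) / (1 - Real.exp (-(Δ ^ 2) / 8)) *
          Real.exp (-(m : ℝ) * Δ ^ 2 / 8) :=
  argmin_prob_comparison_general μ ε hindep hgauss Δ hΔ ℓ m S hS Lm LS hLm hLS
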